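/- Let G be a connected graph of order n containing two vertices x and y, each of degree at least 2, with d(x,y) ≥ 3. Then γ_{StR}(G) ≤ n − 2. -/

import Mathlib

/-! Since `d(x, y) ≥ 3`, the neighbourhoods of `x` and `y` are disjoint and neither vertex is adjacent
to a neighbour of the other. Choose two neighbours of each, give `x` and `y` weight `2`, the four
chosen neighbours weight `0` and every other vertex weight `1`. Every `0` is adjacent to a `2` that
has exactly two `0`-neighbours, which the bound `1 + ⌈2/2⌉ = 2` permits, and the total weight is
`4 + (n - 6) = n - 2`. -/

namespace SimpleGraph

variable {V : Type*}

/-- The degree of a vertex (cardinality of its open neighborhood). -/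
noncomputable def deg (G : SimpleGraph V) (v : V) : ℕ := (G.neighborSet v).ncard

/-- Maximum degree. -/
noncomputable def maxDeg [Fintype V] (G : SimpleGraph V) : ℕ :=
  Finset.univ.sup fun v => G.deg v

/-- A strong Roman dominating function: `f : V → {0,1,...,⌈Δ/2⌉+1}` such that every vertex
with value 0 has a neighbor `w` with `f w ≥ 2` and `f w ≥ 1 + ⌈|N(w) ∩ B₀|/2⌉`. -/
def IsStRDF [Fintype V] (G : SimpleGraph V) (f : V → ℕ) : Prop :=
  (∀ v, f v ≤ (G.maxDeg + 1) / 2 + 1) ∧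
  ∀ v, f v = 0 → ∃ w, G.Adj v w ∧ 2 ≤ f w ∧
    1 + ((G.neighborSet w ∩ {u | f u = 0}).ncard + 1) / 2 ≤ f w

/-- The strong Roman domination number. -/
noncomputable def gammaStR [Fintype V] (G : SimpleGraph V) : ℕ :=
  sInf {k | ∃ f, G.IsStRDF f ∧ ∑ v, f v = k}

/-- A Roman dominating function. -/
def IsRDF (G : SimpleGraph V) (f : V → ℕ) : Prop :=
  (∀ v, f v ≤ 2) ∧ ∀ v, f v = 0 → ∃ w, G.Adj v w ∧ f w = 2

/-- The Roman domination number. -/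
noncomputable def gammaR [Fintype V] (G : SimpleGraph V) : ℕ :=
  sInf {k | ∃ f, G.IsRDF f ∧ ∑ v, f v = k}

/-- A dominating set. -/
def IsDomSet (G : SimpleGraph V) (D : Set V) : Prop :=
  ∀ v ∉ D, ∃ w ∈ D, G.Adj v w

/-- The domination number. -/
noncomputable def gammaDom [Fintype V] (G : SimpleGraph V) : ℕ :=
  sInf {k | ∃ D : Set V, G.IsDomSet D ∧ D.ncard = k}

end SimpleGraph

namespace SimpleGraph

variable {V : Type*} {G : SimpleGraph V}

theorem deg_le_maxDeg [Fintype V] (G : SimpleGraph V) (v : V) : G.deg v ≤ G.maxDeg :=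
  Finset.le_sup (Finset.mem_univ v)

theorem exists_finset_subset_neighborSet_card_eq [Finite V] {v : V} {k : ℕ}
    (h : k ≤ G.deg v) : ∃ A : Finset V, ↑A ⊆ G.neighborSet v ∧ A.card = k := by
  obtain ⟨t, hts, htk⟩ := Set.exists_subset_card_eq h
  exact ⟨(Set.toFinite t).toFinset, by simpa using hts, by rw [← Set.ncard_eq_toFinset_card, htk]⟩

theorem ncard_neighborSet_inter_union [DecidableEq V] {v : V} {A C : Finset V}
    (hA : ↑A ⊆ G.neighborSet v) (hC : Disjoint (G.neighborSet v) ↑C) :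
    (G.neighborSet v ∩ ↑(A ∪ C)).ncard = A.card := by
  rw [Finset.coe_union, Set.inter_union_distrib_left, Set.inter_eq_right.2 hA, hC.inter_eq,
    Set.union_empty, Set.ncard_coe_finset]

theorem dist_le_two_of_adj_of_adj {x u y : V} (hxu : G.Adj x u) (huy : G.Adj u y) :
    G.dist x y ≤ 2 :=
  G.dist_le (.cons hxu huy.toWalk)

theorem not_adj_of_two_le_dist {x y : V} (h : 2 ≤ G.dist x y) : ¬G.Adj x y := fun hxy => by
  rw [← dist_eq_one_iff_adj] at hxy; omega

theorem disjoint_neighborSet_of_three_le_dist {x y : V} (h : 3 ≤ G.dist x y) :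
    Disjoint (G.neighborSet x) (G.neighborSet y) :=
  Set.disjoint_left.2 fun _ hx hy => by
    have := dist_le_two_of_adj_of_adj hx (G.adj_symm hy); omega

def twoZeroOne [DecidableEq V] (T Z : Finset V) (v : V) : ℕ :=
  if v ∈ T then 2 else if v ∈ Z then 0 else 1

section twoZeroOne

variable [DecidableEq V] {T Z : Finset V}

theorem twoZeroOne_le_two (v : V) : twoZeroOne T Z v ≤ 2 := by
  unfold twoZeroOne; split_ifs <;> omega

theorem twoZeroOne_eq_zero_iff {v : V} : twoZeroOne T Z v = 0 ↔ v ∈ Z ∧ v ∉ T := by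
  unfold twoZeroOne; split_ifs <;> simp_all

theorem twoZeroOne_add_ite_mem (h : Disjoint T Z) (v : V) :
    (twoZeroOne T Z v + if v ∈ Z then 1 else 0) = 1 + if v ∈ T then 1 else 0 := by
  unfold twoZeroOne
  by_cases hT : v ∈ T
  · simp [hT, Finset.disjoint_left.1 h hT]
  · split_ifs <;> simp_all

variable [Fintype V]

theorem isStRDF_twoZeroOne (hΔ : 1 ≤ G.maxDeg)
    (hZ : ∀ z ∈ Z, ∃ t ∈ T, G.Adj z t ∧ (G.neighborSet t ∩ Z).ncard ≤ 2) :
    G.IsStRDF (twoZeroOne T Z) := by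
  refine ⟨fun v => (twoZeroOne_le_two v).trans (by omega), fun v hv => ?_⟩
  obtain ⟨t, htT, hvt, ht⟩ := hZ v (twoZeroOne_eq_zero_iff.1 hv).1
  have hft : twoZeroOne T Z t = 2 := if_pos htT
  have hzeros : (G.neighborSet t ∩ {u | twoZeroOne T Z u = 0}).ncard ≤ 2 :=
    (Set.ncard_le_ncard (Set.inter_subset_inter_right _
      fun u hu => (twoZeroOne_eq_zero_iff.1 hu).1)).trans ht
  exact ⟨t, hvt, hft.ge, by omega⟩

open Finset in
theorem sum_twoZeroOne_add_card (h : Disjoint T Z) :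
    ∑ v, twoZeroOne T Z v + #Z = Fintype.card V + #T :=
  calc ∑ v, twoZeroOne T Z v + #Z
      = ∑ v, (twoZeroOne T Z v + if v ∈ Z then 1 else 0) := by simp [sum_add_distrib]
    _ = ∑ v, (1 + if v ∈ T then 1 else 0) := sum_congr rfl fun v _ => twoZeroOne_add_ite_mem h v
    _ = Fintype.card V + #T := by simp [sum_add_distrib]

end twoZeroOne

theorem gammaStR_le_sum [Fintype V] {f : V → ℕ} (hf : G.IsStRDF f) : G.gammaStR ≤ ∑ v, f v :=
  Nat.sInf_le ⟨f, hf, rfl⟩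

end SimpleGraph

theorem stmt11_general {V : Type*} [Fintype V] (G : SimpleGraph V)
    (x y : V) (hx : 2 ≤ G.deg x) (hy : 2 ≤ G.deg y) (hd : 3 ≤ G.dist x y) :
    G.gammaStR ≤ Fintype.card V - 2 := by
  classical
  obtain ⟨A, hAx, hA⟩ := G.exists_finset_subset_neighborSet_card_eq hx
  obtain ⟨C, hCy, hC⟩ := G.exists_finset_subset_neighborSet_card_eq hy
  have hN := G.disjoint_neighborSet_of_three_le_dist hd
  have hxy : ¬G.Adj x y := G.not_adj_of_two_le_dist (by omega)
  have hne : x ≠ y := by rintro rfl; simp at hd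
  have hAC : Disjoint A C := Finset.disjoint_coe.1 (hN.mono hAx hCy)
  have hxA : x ∉ A := fun h => G.irrefl (hAx h)
  have hxC : x ∉ C := fun h => hxy (G.adj_symm (hCy h))
  have hyA : y ∉ A := fun h => hxy (hAx h)
  have hyC : y ∉ C := fun h => G.irrefl (hCy h)
  have hTZ : Disjoint {x, y} (A ∪ C) := by simp [hxA, hxC, hyA, hyC]
  have hf : G.IsStRDF (SimpleGraph.twoZeroOne {x, y} (A ∪ C)) := by
    refine SimpleGraph.isStRDF_twoZeroOne ((G.deg_le_maxDeg x).trans' (by omega)) fun z hz => ?_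
    rcases Finset.mem_union.1 hz with hz | hz
    · refine ⟨x, by simp, G.adj_symm (hAx hz), ?_⟩
      rw [G.ncard_neighborSet_inter_union hAx (hN.mono_right hCy), hA]
    · refine ⟨y, by simp, G.adj_symm (hCy hz), ?_⟩
      rw [Finset.union_comm, G.ncard_neighborSet_inter_union hCy (hN.symm.mono_right hAx), hC]
  have hsum := SimpleGraph.sum_twoZeroOne_add_card hTZ
  rw [Finset.card_union_of_disjoint hAC, hA, hC, Finset.card_pair hne] at hsum
  exact (G.gammaStR_le_sum hf).trans (by omega)

/-- If a connected graph `G` of order `n` has two vertices `x`, `y` of degree at least 2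
with `d(x,y) ≥ 3`, then `γ_{StR}(G) ≤ n − 2`. -/
theorem stmt11 {V : Type*} [Fintype V] (G : SimpleGraph V) (hc : G.Connected)
    (x y : V) (hx : 2 ≤ G.deg x) (hy : 2 ≤ G.deg y) (hd : 3 ≤ G.dist x y) :
    G.gammaStR ≤ Fintype.card V - 2 :=
  stmt11_general G x y hx hy hd
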